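/- If there exists a solution i1,…,im to the PCP instance L (i.e., u_{i1}…u_{im} = v_{i1}…v_{im}), then Spoiler has a winning strategy in the two-buffer simulation game with two unbounded buffers on the automata 𝒜_L and ℬ_L; i.e., 𝒜_L ⋢(ω,ω) ℬ_L. -/

import Mathlib

open scoped Classical

/-- A Büchi automaton over alphabet `S`. -/
structure BA (S : Type) where
  Q : Type
  init : Q
  trans : Q → S → Q → Prop
  acc : Q → Prop

/-- The Büchi language of `A`: infinite words with a run from the initial state
visiting accepting states infinitely often. -/
def BA.Lang {S : Type} (A : BA S) : Set (ℕ → S) :=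
  { w | ∃ ρ : ℕ → A.Q, ρ 0 = A.init ∧ (∀ n, A.trans (ρ n) (w n) (ρ (n+1))) ∧
        ∀ n, ∃ m, n ≤ m ∧ A.acc (ρ m) }

/-- A configuration of the two-buffer simulation game: Spoiler's state, contents of
the two FIFO buffers (head = oldest letter), Duplicator's state. -/
structure Cfg {S : Type} (A B : BA S) where
  qa : A.Q
  b1 : List S
  b2 : List S
  qb : B.Q

/-- The configuration after Spoiler's move `m = (a, q')`: his state becomes `q'` and
the letter `a` is appended to buffer `σ a` (`true` = buffer 1, `false` = buffer 2). -/
def midCfg {S : Type} {A B : BA S} (σ : S → Bool) (c : Cfg A B) (m : S × A.Q) : Cfg A B :=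
  ⟨m.2, if σ m.1 then c.b1 ++ [m.1] else c.b1, if σ m.1 then c.b2 else c.b2 ++ [m.1], c.qb⟩

/-- Applying a finite sequence of Duplicator consumption steps: each step picks a buffer
(`true` = buffer 1) and a successor state, consuming the oldest letter of that buffer
along a matching transition of `B`.  Returns `none` if some step is illegal. -/
noncomputable def dupApply {S : Type} (A B : BA S) :
    Cfg A B → List (Bool × B.Q) → Option (Cfg A B)
  | c, [] => some c
  | c, (j, p') :: ms =>
    if j then
      match c.b1 with
      | [] => none
      | b :: β => if B.trans c.qb b p' then dupApply A B ⟨c.qa, β, c.b2, p'⟩ ms else none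
    else
      match c.b2 with
      | [] => none
      | b :: β => if B.trans c.qb b p' then dupApply A B ⟨c.qa, c.b1, β, p'⟩ ms else none

/-- The configuration at the start of round `n` (i.e. after Duplicator's moves of
round `n-1`), given Spoiler's moves `sp` and Duplicator's responses `dm`;
`none` once an illegal move has occurred. -/
noncomputable def playCfg {S : Type} (A B : BA S) (σ : S → Bool)
    (sp : ℕ → S × A.Q) (dm : ℕ → List (Bool × B.Q)) : ℕ → Option (Cfg A B)
  | 0 => some ⟨A.init, [], [], B.init⟩
  | n+1 =>
    match playCfg A B σ sp dm n with
    | none => none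
    | some c =>
      if A.trans c.qa (sp n).1 (sp n).2 then dupApply A B (midCfg σ c (sp n)) (dm n) else none

/-- Number of letters put into buffer `j` by Spoiler during the first `n` rounds. -/
noncomputable def pushed {S : Type} {QA : Type} (σ : S → Bool) (sp : ℕ → S × QA)
    (j : Bool) (n : ℕ) : ℕ :=
  ((Finset.range n).filter fun i => σ (sp i).1 = j).card

/-- Number of letters consumed from buffer `j` by Duplicator during the first `n` rounds. -/
noncomputable def consumed {QB : Type} (dm : ℕ → List (Bool × QB)) (j : Bool) (n : ℕ) : ℕ :=
  ∑ i ∈ Finset.range n, ((dm i).filter fun x => x.1 = j).length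

/-- Duplicator's strategy is consistent with the moves `dm` of a play. -/
def Consistent {S : Type} (A B : BA S)
    (dstrat : List ((S × A.Q) × List (Bool × B.Q)) → (S × A.Q) → List (Bool × B.Q))
    (sp : ℕ → S × A.Q) (dm : ℕ → List (Bool × B.Q)) : Prop :=
  ∀ n, dm n = dstrat (List.ofFn fun i : Fin n => (sp i, dm i)) (sp n)

/-- Spoiler's moves are legal as long as the play is defined. -/
def SpLegal {S : Type} (A B : BA S) (σ : S → Bool)
    (sp : ℕ → S × A.Q) (dm : ℕ → List (Bool × B.Q)) : Prop :=
  ∀ n c, playCfg A B σ sp dm n = some c → A.trans c.qa (sp n).1 (sp n).2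

/-- Duplicator's winning condition for a play of the two-buffer game with
capacities `(k1, k2)`: the buffers never exceed their capacities (checked after her
moves), and either Spoiler's run visits accepting states only finitely often, or
every letter put into a buffer is eventually consumed and Duplicator's run visits
accepting states infinitely often. -/
def Win2 {S : Type} (A B : BA S) (σ : S → Bool) (k1 k2 : ℕ∞)
    (sp : ℕ → S × A.Q) (dm : ℕ → List (Bool × B.Q)) : Prop :=
  (∀ n c, playCfg A B σ sp dm n = some c →
      (c.b1.length : ℕ∞) ≤ k1 ∧ (c.b2.length : ℕ∞) ≤ k2) ∧
  ((∃ N, ∀ n, N ≤ n → ¬ A.acc (sp n).2) ∨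
    ((∀ n j, ∃ m, pushed σ sp j n ≤ consumed dm j m) ∧
     (∀ n, ∃ m, n ≤ m ∧ ∃ x ∈ dm m, B.acc x.2)))

/-- `dstrat` is a winning strategy for Duplicator in the two-buffer simulation game on
`A`, `B` with letter distribution `σ` and capacities `(k1, k2)`: against every legal
behaviour of Spoiler, all of Duplicator's prescribed moves are legal (the play never
breaks) and the resulting play is won by Duplicator. -/
def WinningStrat2 {S : Type} (A B : BA S) (σ : S → Bool) (k1 k2 : ℕ∞)
    (dstrat : List ((S × A.Q) × List (Bool × B.Q)) → (S × A.Q) → List (Bool × B.Q)) : Prop :=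
  ∀ sp dm, Consistent A B dstrat sp dm → SpLegal A B σ sp dm →
    (∀ n, (playCfg A B σ sp dm n).isSome) ∧ Win2 A B σ k1 k2 sp dm

/-- Two-buffer simulation `A ⊑(k1,k2) B`: Duplicator has a winning strategy. -/
def Sim2 {S : Type} (A B : BA S) (σ : S → Bool) (k1 k2 : ℕ∞) : Prop :=
  ∃ dstrat, WinningStrat2 A B σ k1 k2 dstrat
/-- The alphabet `{0, 1, #, 0̄, 1̄, #̄}` used in the PCP reduction. -/
inductive PL | z | o | hash | zb | ob | hashb
deriving DecidableEq

/-- Unbarred copy of a bit. -/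
def pl : Bool → PL | false => .z | true => .o

/-- Barred copy of a bit. -/
def br : Bool → PL | false => .zb | true => .ob

/-- The word `u · v̄` over `PL` associated with a PCP pair `(u, v)`. -/
def wrd (u v : List Bool) : List PL := u.map pl ++ v.map br

/-- The distribution function of the PCP reduction: unbarred letters go to
buffer 1 (`true`), barred letters to buffer 2 (`false`). -/
def σPL : PL → Bool
  | .z => true | .o => true | .hash => true
  | .zb => false | .ob => false | .hashb => false

/-- The automaton `𝒜_L` of the PCP reduction for the instance
`L = {(u i, v i) | i < nn}`.  States: `Sum.inl 0 = s` (initial), `Sum.inl 1 = t`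
(the common hub), `Sum.inl 2 = h` (between `#` and `#̄`), `Sum.inl 3 = r`
(accepting), and `Sum.inr (i, k)` for the internal states of the path reading
`u_i · v̄_i` (position `k` reached after `k` letters). -/
def AL (nn : ℕ) (u v : Fin nn → List Bool) : BA PL where
  Q := Fin 4 ⊕ (Fin nn × ℕ)
  init := Sum.inl 0
  acc := fun q => q = Sum.inl 3
  trans := fun q x q' =>
    (∃ i : Fin nn, (q = Sum.inl 0 ∨ q = Sum.inl 1) ∧
        (wrd (u i) (v i))[0]? = some x ∧ q' = Sum.inr (i, 1)) ∨
    (∃ i k, q = Sum.inr (i, k) ∧ (wrd (u i) (v i))[k]? = some x ∧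
        k + 1 < (wrd (u i) (v i)).length ∧ q' = Sum.inr (i, k + 1)) ∨
    (∃ i k, q = Sum.inr (i, k) ∧ (wrd (u i) (v i))[k]? = some x ∧
        k + 1 = (wrd (u i) (v i)).length ∧ q' = Sum.inl 1) ∨
    (q = Sum.inl 1 ∧ x = .hash ∧ q' = Sum.inl 2) ∨
    (q = Sum.inl 2 ∧ x = .hashb ∧ q' = Sum.inl 3) ∨
    (q = Sum.inl 3 ∧ x = .hash ∧ q' = Sum.inl 2)

/-- The automaton `ℬ_L` of the PCP reduction.  States (as elements of `Fin 7`):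
`0 = p0` (initial), `1 = p1`, `2 = p2`, `3 = p3`, `4 = p4`, `5 = p5` (accepting
sink), `6 = q`. -/
def BL : BA PL where
  Q := Fin 7
  init := 0
  acc := fun q => q = 5
  trans := fun q x q' =>
    (q = 0 ∧ x = .z ∧ q' = 2) ∨ (q = 2 ∧ x = .zb ∧ q' = 0) ∨
    (q = 0 ∧ x = .o ∧ q' = 4) ∨ (q = 4 ∧ x = .ob ∧ q' = 0) ∨
    (q = 0 ∧ x = .z ∧ q' = 1) ∨ (q = 1 ∧ (x = .ob ∨ x = .hashb) ∧ q' = 5) ∨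
    (q = 0 ∧ x = .o ∧ q' = 6) ∨ (q = 6 ∧ (x = .zb ∨ x = .hashb) ∧ q' = 5) ∨
    (q = 0 ∧ x = .hash ∧ q' = 3) ∨ (q = 3 ∧ (x = .zb ∨ x = .ob) ∧ q' = 5) ∨
    (q = 5 ∧ q' = 5)

/-!
Spoiler ignores Duplicator and reads the word `u_{i₁} v̄_{i₁} ⋯ u_{iₘ} v̄_{iₘ} (# #̄)^ω`, which
`𝒜_L` accepts. Its unbarred letters, which go to buffer 1, spell `s # # ⋯`, and its barred
letters, which go to buffer 2, spell `s̄ #̄ #̄ ⋯`, where `s` is the common value of the two sides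
of the solution. `ℬ_L` reaches its accepting sink only by reading an unbarred letter followed by
a barred letter that is not its copy. Duplicator consumes both buffers in order, so she always
reads the two projections position by position: whenever `ℬ_L` waits for a barred letter after
the unbarred letter at position `k`, the next barred letter is the copy of that very letter.
Hence her run never accepts, while Spoiler's run does.
-/

namespace BA

variable {S : Type}

def startAt (A : BA S) (q : A.Q) : BA S := { A with init := q }

inductive Reads (A : BA S) : A.Q → List S → A.Q → Prop
  | nil (q : A.Q) : Reads A q [] q
  | cons {q q' q'' : A.Q} {a : S} {l : List S} :
      A.trans q a q' → Reads A q' l q'' → Reads A q (a :: l) q''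

variable {A : BA S}

theorem Reads.append {q q' q'' : A.Q} {l l' : List S} (h : A.Reads q l q')
    (h' : A.Reads q' l' q'') : A.Reads q (l ++ l') q'' := by
  induction h with
  | nil => exact h'
  | cons ht _ ih => exact .cons ht (ih h')

theorem Reads.appendStream_mem_lang {q q' : A.Q} {l : List S} {w : Stream' S}
    (h : A.Reads q l q') (hw : w ∈ (A.startAt q').Lang) : l ++ₛ w ∈ (A.startAt q).Lang := by
  induction h with
  | nil => exact hw
  | @cons q q' _ a _ ht _ ih =>
    obtain ⟨ρ, hρ0, hρ, hacc⟩ := ih hw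
    refine ⟨Stream'.cons q ρ, rfl, ?_, fun n => ?_⟩
    · rintro (_ | n)
      · change A.trans q a (ρ 0)
        rwa [show ρ 0 = q' from hρ0]
      · exact hρ n
    · obtain ⟨m, hm, hm'⟩ := hacc n
      exact ⟨m + 1, by omega, hm'⟩

end BA

section Game

variable {S : Type} {A B : BA S}

noncomputable def responses
    (dstrat : List ((S × A.Q) × List (Bool × B.Q)) → (S × A.Q) → List (Bool × B.Q))
    (sp : ℕ → S × A.Q) : ℕ → List (Bool × B.Q)
  | n => dstrat (List.ofFn fun i : Fin n => (sp i, responses dstrat sp i)) (sp n)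
decreasing_by exact i.isLt

theorem consistent_responses
    (dstrat : List ((S × A.Q) × List (Bool × B.Q)) → (S × A.Q) → List (Bool × B.Q))
    (sp : ℕ → S × A.Q) : Consistent A B dstrat sp (responses dstrat sp) := by
  intro n
  rw [responses]

theorem dupApply_invariant (P : Cfg A B → Prop)
    (h₁ : ∀ c b β p, P c → c.b1 = b :: β → B.trans c.qb b p → P ⟨c.qa, β, c.b2, p⟩)
    (h₂ : ∀ c b β p, P c → c.b2 = b :: β → B.trans c.qb b p → P ⟨c.qa, c.b1, β, p⟩) :
    ∀ (ms : List (Bool × B.Q)) (c c' : Cfg A B), P c → dupApply A B c ms = some c' →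
      P c' ∧ ∀ x ∈ ms, ∃ d, P d ∧ d.qb = x.2 := by
  intro ms
  induction ms with
  | nil =>
    intro c c' hc h
    cases h
    exact ⟨hc, by simp⟩
  | cons m ms ih =>
    obtain ⟨j, p⟩ := m
    intro c c' hc h
    have step : ∀ d, P d → d.qb = p → dupApply A B d ms = some c' →
        P c' ∧ ∀ x ∈ (j, p) :: ms, ∃ d, P d ∧ d.qb = x.2 := fun d hd hq h =>
      let ⟨hc', hms⟩ := ih d c' hd h
      ⟨hc', List.forall_mem_cons.2 ⟨⟨d, hd, hq⟩, hms⟩⟩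
    cases j <;> simp only [dupApply, Bool.false_eq_true, ↓reduceIte] at h <;> split at h
    · simp at h
    · next hb =>
      split_ifs at h with ht
      exact step _ (h₂ c _ _ p hc hb ht) rfl h
    · simp at h
    · next hb =>
      split_ifs at h with ht
      exact step _ (h₁ c _ _ p hc hb ht) rfl h

theorem exists_playCfg_of_playCfg_succ {σ : S → Bool} {sp : ℕ → S × A.Q}
    {dm : ℕ → List (Bool × B.Q)} {n : ℕ} {c' : Cfg A B}
    (h : playCfg A B σ sp dm (n + 1) = some c') :
    ∃ c, playCfg A B σ sp dm n = some c ∧ A.trans c.qa (sp n).1 (sp n).2 ∧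
      dupApply A B (midCfg σ c (sp n)) (dm n) = some c' := by
  rw [playCfg] at h
  split at h
  · simp at h
  · next c hc =>
    split_ifs at h with ht
    exact ⟨c, hc, ht, h⟩

/-- An invariant of the plays in which Spoiler reads `w` whatever Duplicator does; `I n` holds
at the start of round `n`, and Duplicator's run never enters an accepting state. -/
structure RejectingInvariant (σ : S → Bool) (w : Stream' S) (I : ℕ → Cfg A B → Prop) :
    Prop where
  init : I 0 ⟨A.init, [], [], B.init⟩
  push : ∀ n c q, I n c → I (n + 1) (midCfg σ c (w n, q))
  pop₁ : ∀ n c b β p, I n c → c.b1 = b :: β → B.trans c.qb b p → I n ⟨c.qa, β, c.b2, p⟩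
  pop₂ : ∀ n c b β p, I n c → c.b2 = b :: β → B.trans c.qb b p → I n ⟨c.qa, c.b1, β, p⟩
  not_acc : ∀ n c, I n c → ¬ B.acc c.qb

theorem not_sim2_of_rejectingInvariant {σ : S → Bool} {w : Stream' S}
    {I : ℕ → Cfg A B → Prop} (hw : w ∈ A.Lang) (hI : RejectingInvariant σ w I) (k1 k2 : ℕ∞) :
    ¬ Sim2 A B σ k1 k2 := by
  rintro ⟨dstrat, hwin⟩
  obtain ⟨ρ, hρ0, hρ, hρacc⟩ := hw
  let sp : ℕ → S × A.Q := fun n => (w n, ρ (n + 1))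
  let dm := responses dstrat sp
  let J : ℕ → Cfg A B → Prop := fun n c => I n c ∧ c.qa = ρ n
  have hround : ∀ n c c', J n c → dupApply A B (midCfg σ c (sp n)) (dm n) = some c' →
      J (n + 1) c' ∧ ∀ x ∈ dm n, ∃ d, J (n + 1) d ∧ d.qb = x.2 := fun n c c' hc =>
    dupApply_invariant (J (n + 1))
      (fun c b β p hc hb ht => ⟨hI.pop₁ _ c b β p hc.1 hb ht, hc.2⟩)
      (fun c b β p hc hb ht => ⟨hI.pop₂ _ c b β p hc.1 hb ht, hc.2⟩)
      (dm n) _ c' ⟨hI.push n c _ hc.1, rfl⟩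
  have hreach : ∀ n c, playCfg A B σ sp dm n = some c → J n c := by
    intro n
    induction n with
    | zero =>
      rintro c ⟨⟩
      exact ⟨hI.init, hρ0.symm⟩
    | succ n ih =>
      intro c' h
      obtain ⟨c, hc, -, h⟩ := exists_playCfg_of_playCfg_succ h
      exact (hround n c c' (ih c hc) h).1
  have hlegal : SpLegal A B σ sp dm := fun n c hc => (hreach n c hc).2 ▸ hρ n
  obtain ⟨hsome, -, hwin⟩ := hwin sp dm (consistent_responses dstrat sp) hlegal
  rcases hwin with ⟨N, hN⟩ | ⟨-, hBacc⟩
  · obtain ⟨m, hm, hacc⟩ := hρacc (N + 1)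
    obtain ⟨n, rfl⟩ : ∃ n, m = n + 1 := ⟨m - 1, by omega⟩
    exact hN n (by omega) hacc
  · obtain ⟨n, -, x, hx, hxacc⟩ := hBacc 0
    obtain ⟨c', hc'⟩ := Option.isSome_iff_exists.1 (hsome (n + 1))
    obtain ⟨c, hc, -, h⟩ := exists_playCfg_of_playCfg_succ hc'
    obtain ⟨d, hd, hdx⟩ := (hround n c c' (hreach n c hc) h).2 x hx
    exact hI.not_acc _ d hd.1 (hdx ▸ hxacc)

end Game

namespace Stream'

variable {S : Type}

theorem take_const (x : S) (m : ℕ) : (const x).take m = List.replicate m x := by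
  induction m with
  | zero => rfl
  | succ m ih => rw [take_succ', ih, List.replicate_succ']; rfl

theorem get_eq_of_filter_take_prefix {w a : Stream' S} {p : S → Bool} {n K : ℕ}
    (h : (w.take (n + 1)).filter p <+: a.take K) (hp : p (w.get n) = true) :
    w.get n = a.get ((w.take n).countP p) := by
  rw [take_succ', List.filter_append, List.filter_singleton, hp, cond_true] at h
  have hlt : ((w.take n).filter p).length < (((w.take n).filter p) ++ [w.get n]).length := by
    simp
  rw [List.countP_eq_length_filter, ← take_get (h := h.length_le.trans_lt' hlt),
    ← h.getElem hlt, List.getElem_concat_length rfl]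

theorem drop_take_succ (a : Stream' S) {c P : ℕ} (h : c ≤ P) :
    (a.take (P + 1)).drop c = (a.take P).drop c ++ [a.get P] := by
  rw [take_succ', List.drop_append_of_le_length (by simpa using h)]

theorem eq_of_drop_take_eq_cons {a : Stream' S} {c P : ℕ} {b : S} {β : List S}
    (h : (a.take P).drop c = b :: β) : c < P ∧ b = a.get c ∧ β = (a.take P).drop (c + 1) := by
  have hc : c < P := by
    by_contra hc
    rw [List.drop_eq_nil_of_le (by simp; omega)] at h
    cases h
  rw [List.drop_eq_getElem_cons (by simpa using hc), take_get, List.cons.injEq] at h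
  exact ⟨hc, h.1.symm, h.2.symm⟩

end Stream'

section PCP

variable {nn : ℕ} {u v : Fin nn → List Bool}

theorem two_le_length_wrd {a b : List Bool} (ha : a ≠ []) (hb : b ≠ []) :
    2 ≤ (wrd a b).length := by
  have := List.length_pos_iff.2 ha
  have := List.length_pos_iff.2 hb
  simp only [wrd, List.length_append, List.length_map]
  omega

theorem reads_drop_wrd (i : Fin nn) {k : ℕ} (hk : 1 ≤ k) (hkL : k < (wrd (u i) (v i)).length) :
    (AL nn u v).Reads (Sum.inr (i, k)) ((wrd (u i) (v i)).drop k) (Sum.inl 1) := by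
  rw [List.drop_eq_getElem_cons hkL]
  by_cases hlast : k + 1 = (wrd (u i) (v i)).length
  · rw [List.drop_eq_nil_of_le hlast.ge]
    exact .cons (Or.inr (Or.inr (Or.inl ⟨i, k, rfl, List.getElem?_eq_getElem hkL, hlast, rfl⟩)))
      (.nil _)
  · exact .cons (Or.inr (Or.inl ⟨i, k, rfl, List.getElem?_eq_getElem hkL, by omega, rfl⟩))
      (reads_drop_wrd i (by omega) (by omega))
termination_by (wrd (u i) (v i)).length - k

theorem reads_wrd (i : Fin nn) (hu : u i ≠ []) (hv : v i ≠ []) {q : (AL nn u v).Q}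
    (hq : q = Sum.inl 0 ∨ q = Sum.inl 1) :
    (AL nn u v).Reads q (wrd (u i) (v i)) (Sum.inl 1) := by
  have hL := two_le_length_wrd hu hv
  rw [show wrd (u i) (v i) = _ from List.drop_eq_getElem_cons (i := 0) (l := wrd (u i) (v i))
    (by omega)]
  exact .cons (Or.inl ⟨i, hq, List.getElem?_eq_getElem (by omega), rfl⟩)
    (reads_drop_wrd i le_rfl (by omega))

def solutionWord (u v : Fin nn → List Bool) (idx : List (Fin nn)) : List PL :=
  (idx.map fun i => wrd (u i) (v i)).flatten

theorem reads_solutionWord (hu : ∀ i, u i ≠ []) (hv : ∀ i, v i ≠ []) (idx : List (Fin nn)) :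
    (AL nn u v).Reads (Sum.inl 1) (solutionWord u v idx) (Sum.inl 1) := by
  induction idx with
  | nil => exact .nil _
  | cons i idx ih => exact (reads_wrd i (hu i) (hv i) (.inr rfl)).append ih

def hashes : Stream' PL := fun n => if n % 2 = 0 then .hash else .hashb

theorem hashes_mem_lang : hashes ∈ ((AL nn u v).startAt (Sum.inl 1)).Lang := by
  refine ⟨fun n => if n = 0 then Sum.inl 1 else if n % 2 = 1 then Sum.inl 2 else Sum.inl 3,
    rfl, fun n => ?_, fun n => ⟨2 * n + 2, by omega, by simp [BA.startAt, AL]⟩⟩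
  change (AL nn u v).trans _ _ _
  have hsucc : (n + 1) % 2 = 1 - n % 2 := by omega
  rcases Nat.mod_two_eq_zero_or_one n with h | h
  · by_cases h0 : n = 0
    · subst h0; simp [AL, hashes]
    · simp [AL, hashes, h, h0, hsucc]
  · simp [AL, hashes, h, hsucc, show n ≠ 0 by omega]

def spoilerWord (u v : Fin nn → List Bool) (idx : List (Fin nn)) : Stream' PL :=
  solutionWord u v idx ++ₛ hashes

theorem spoilerWord_mem_lang (hu : ∀ i, u i ≠ []) (hv : ∀ i, v i ≠ []) {idx : List (Fin nn)}
    (hne : idx ≠ []) : spoilerWord u v idx ∈ (AL nn u v).Lang := by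
  obtain ⟨i, idx, rfl⟩ := List.exists_cons_of_ne_nil hne
  have hreads : (AL nn u v).Reads (Sum.inl 0) (solutionWord u v (i :: idx)) (Sum.inl 1) :=
    (reads_wrd i (hu i) (hv i) (.inl rfl)).append (reads_solutionWord hu hv idx)
  exact hreads.appendStream_mem_lang hashes_mem_lang

@[simp] theorem σPL_pl (b : Bool) : σPL (pl b) = true := by cases b <;> rfl

@[simp] theorem σPL_br (b : Bool) : σPL (br b) = false := by cases b <;> rfl

theorem filter_σPL_solutionWord (idx : List (Fin nn)) :
    (solutionWord u v idx).filter σPL = (idx.map u).flatten.map pl := by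
  simp [solutionWord, List.filter_flatten, wrd, List.filter_map, Function.comp_def,
    List.map_flatten]

theorem filter_not_σPL_solutionWord (idx : List (Fin nn)) :
    (solutionWord u v idx).filter (fun x => !σPL x) = (idx.map v).flatten.map br := by
  simp [solutionWord, List.filter_flatten, wrd, List.filter_map, Function.comp_def,
    List.map_flatten]

theorem take_hashes (m : ℕ) :
    hashes.take (2 * m) = (List.replicate m [PL.hash, .hashb]).flatten := by
  induction m with
  | zero => rfl
  | succ m ih =>
    rw [show 2 * (m + 1) = 2 * m + 1 + 1 by ring, Stream'.take_succ', Stream'.take_succ', ih,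
      List.replicate_succ', List.flatten_append]
    simp [hashes, Stream'.get]

theorem filter_take_spoilerWord_prefix {p : PL → Bool} {x : PL}
    (hx : [PL.hash, PL.hashb].filter p = [x]) (idx : List (Fin nn)) (n : ℕ) :
    ((spoilerWord u v idx).take n).filter p <+:
      ((solutionWord u v idx).filter p ++ₛ Stream'.const x).take
        (((solutionWord u v idx).filter p).length + n) := by
  have hpre : (spoilerWord u v idx).take n <+: solutionWord u v idx ++ hashes.take (2 * n) := by
    rw [Stream'.append_take]
    exact Stream'.take_prefix_take_left _ _ _ (by omega)
  have htail : (hashes.take (2 * n)).filter p = (Stream'.const x).take n := by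
    rw [take_hashes, List.filter_flatten, List.map_replicate, hx, List.flatten_replicate_singleton,
      Stream'.take_const]
  have := hpre.filter p
  rwa [List.filter_append, htail, Stream'.append_take] at this

def bar : PL → PL
  | .z => .zb | .o => .ob | .hash => .hashb | x => x

@[simp] theorem σPL_bar (x : PL) : σPL (bar x) = false := by cases x <;> rfl

def padded (s : List Bool) : Stream' PL := s.map pl ++ₛ Stream'.const .hash

theorem σPL_padded_get (s : List Bool) (k : ℕ) : σPL ((padded s).get k) = true := by
  rcases lt_or_ge k s.length with hk | hk
  · rw [padded, Stream'.get_append_left _ _ _ (by simpa using hk)]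
    simp
  · obtain ⟨j, rfl⟩ := Nat.exists_eq_add_of_le hk
    rw [padded, ← List.length_map (f := pl), Stream'.get_append_right]
    rfl

theorem map_bar_padded (s : List Bool) :
    (padded s).map bar = s.map br ++ₛ Stream'.const .hashb := by
  rw [padded, Stream'.map_append_stream, Stream'.map_const, List.map_map]
  congr
  funext b
  cases b <;> rfl

theorem spoilerWord_get_of_σPL {idx : List (Fin nn)} {n : ℕ}
    (h : σPL ((spoilerWord u v idx).get n) = true) :
    (spoilerWord u v idx).get n =
      (padded (idx.map u).flatten).get (((spoilerWord u v idx).take n).countP σPL) := by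
  have hpre := filter_take_spoilerWord_prefix (u := u) (v := v) (p := σPL) rfl idx (n + 1)
  rw [filter_σPL_solutionWord] at hpre
  exact Stream'.get_eq_of_filter_take_prefix hpre h

theorem spoilerWord_get_of_not_σPL {idx : List (Fin nn)}
    (heq : (idx.map u).flatten = (idx.map v).flatten) {n : ℕ}
    (h : σPL ((spoilerWord u v idx).get n) = false) :
    (spoilerWord u v idx).get n =
      bar ((padded (idx.map u).flatten).get
        (((spoilerWord u v idx).take n).countP (fun x => !σPL x))) := by
  have hpre := filter_take_spoilerWord_prefix (u := u) (v := v) (p := fun x => !σPL x) rfl idx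
    (n + 1)
  rw [filter_not_σPL_solutionWord, ← heq, ← map_bar_padded] at hpre
  exact Stream'.get_eq_of_filter_take_prefix hpre (by simpa using h)

theorem BL_trans_init_iff {x : PL} {q : Fin 7} : BL.trans BL.init x q ↔
    x = .z ∧ (q = 1 ∨ q = 2) ∨ x = .o ∧ (q = 4 ∨ q = 6) ∨ x = .hash ∧ q = 3 := by
  simp only [BL]
  grind

theorem not_BL_acc_of_trans_init {x : PL} {q : Fin 7} (h : BL.trans BL.init x q) :
    ¬ BL.acc q := by
  simp only [BL]
  grind [BL_trans_init_iff]

theorem σPL_eq_true_of_BL_trans_init {x : PL} {q : Fin 7} (h : BL.trans BL.init x q) :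
    σPL x = true := by
  grind [BL_trans_init_iff, σPL]

theorem σPL_eq_false_of_BL_trans_init_of_trans {x y : PL} {q p : Fin 7}
    (h : BL.trans BL.init x q) (h' : BL.trans q y p) : σPL y = false := by
  rcases BL_trans_init_iff.1 h with ⟨rfl, rfl | rfl⟩ | ⟨rfl, rfl | rfl⟩ | ⟨rfl, rfl⟩ <;>
    simp [BL] at h' <;> grind [σPL]

theorem eq_init_of_BL_trans_init_of_trans_bar {x : PL} {q p : Fin 7}
    (h : BL.trans BL.init x q) (h' : BL.trans q (bar x) p) : p = BL.init := by
  rcases BL_trans_init_iff.1 h with ⟨rfl, rfl | rfl⟩ | ⟨rfl, rfl | rfl⟩ | ⟨rfl, rfl⟩ <;>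
    simp [BL, bar] at h' <;> grind [BL]

/-- `ℬ_L` in state `q` has read `α₀ ⋯ α_{c₁-1}` and `ᾱ₀ ⋯ ᾱ_{c₂-1}` in some interleaving without
finding a mismatch: either it is balanced and back in `p0`, or it is one unbarred letter ahead
and its state remembers that letter. -/
def BLInv (α : Stream' PL) (c₁ c₂ : ℕ) (q : Fin 7) : Prop :=
  q = BL.init ∧ c₁ = c₂ ∨ c₁ = c₂ + 1 ∧ BL.trans BL.init (α.get c₂) q

namespace BLInv

variable {α : Stream' PL} {c₁ c₂ : ℕ} {q p : Fin 7}

theorem pop₁ (hα : ∀ k, σPL (α.get k) = true) (h : BLInv α c₁ c₂ q)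
    (ht : BL.trans q (α.get c₁) p) : BLInv α (c₁ + 1) c₂ p := by
  rcases h with ⟨rfl, rfl⟩ | ⟨rfl, hq⟩
  · exact .inr ⟨rfl, ht⟩
  · have := σPL_eq_false_of_BL_trans_init_of_trans hq ht
    rw [hα] at this
    contradiction

theorem pop₂ (h : BLInv α c₁ c₂ q) (ht : BL.trans q (bar (α.get c₂)) p) :
    BLInv α c₁ (c₂ + 1) p := by
  rcases h with ⟨rfl, rfl⟩ | ⟨rfl, hq⟩
  · simpa using σPL_eq_true_of_BL_trans_init ht
  · exact .inl ⟨eq_init_of_BL_trans_init_of_trans_bar hq ht, rfl⟩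

theorem not_acc (h : BLInv α c₁ c₂ q) : ¬ BL.acc q := by
  rcases h with ⟨rfl, -⟩ | ⟨-, hq⟩
  · simp [BL]
  · exact not_BL_acc_of_trans_init hq

end BLInv

/-- Spoiler has pushed `P₁` letters of `α` into buffer 1 and `P₂` letters of `ᾱ` into buffer 2,
of which Duplicator has consumed `c₁` and `c₂`. -/
def DupInv {A : BA PL} (α : Stream' PL) (P₁ P₂ : ℕ) (c : Cfg A BL) : Prop :=
  ∃ c₁ ≤ P₁, ∃ c₂ ≤ P₂, c.b1 = (α.take P₁).drop c₁ ∧ c.b2 = ((α.map bar).take P₂).drop c₂ ∧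
    BLInv α c₁ c₂ c.qb

namespace DupInv

variable {A : BA PL} {α : Stream' PL} {P₁ P₂ : ℕ} {c : Cfg A BL}

theorem push₁ (h : DupInv α P₁ P₂ c) (q : A.Q) :
    DupInv α (P₁ + 1) P₂ ⟨q, c.b1 ++ [α.get P₁], c.b2, c.qb⟩ := by
  obtain ⟨c₁, hc₁, c₂, hc₂, hb₁, hb₂, hq⟩ := h
  exact ⟨c₁, by omega, c₂, hc₂, by rw [hb₁, Stream'.drop_take_succ _ hc₁], hb₂, hq⟩

theorem push₂ (h : DupInv α P₁ P₂ c) (q : A.Q) :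
    DupInv α P₁ (P₂ + 1) ⟨q, c.b1, c.b2 ++ [bar (α.get P₂)], c.qb⟩ := by
  obtain ⟨c₁, hc₁, c₂, hc₂, hb₁, hb₂, hq⟩ := h
  exact ⟨c₁, hc₁, c₂, by omega, hb₁, by rw [hb₂, Stream'.drop_take_succ _ hc₂]; rfl, hq⟩

theorem pop₁ (hα : ∀ k, σPL (α.get k) = true) (h : DupInv α P₁ P₂ c) {b : PL} {β : List PL}
    {p : Fin 7} (hb : c.b1 = b :: β) (ht : BL.trans c.qb b p) :
    DupInv α P₁ P₂ ⟨c.qa, β, c.b2, p⟩ := by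
  obtain ⟨c₁, -, c₂, hc₂, hb₁, hb₂, hq⟩ := h
  obtain ⟨hlt, rfl, rfl⟩ := Stream'.eq_of_drop_take_eq_cons (hb₁ ▸ hb)
  exact ⟨c₁ + 1, hlt, c₂, hc₂, rfl, hb₂, hq.pop₁ hα ht⟩

theorem pop₂ (h : DupInv α P₁ P₂ c) {b : PL} {β : List PL} {p : Fin 7}
    (hb : c.b2 = b :: β) (ht : BL.trans c.qb b p) : DupInv α P₁ P₂ ⟨c.qa, c.b1, β, p⟩ := by
  obtain ⟨c₁, hc₁, c₂, -, hb₁, hb₂, hq⟩ := h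
  obtain ⟨hlt, rfl, rfl⟩ := Stream'.eq_of_drop_take_eq_cons (hb₂ ▸ hb)
  exact ⟨c₁, hc₁, c₂ + 1, hlt, hb₁, rfl, hq.pop₂ ht⟩

theorem not_acc (h : DupInv α P₁ P₂ c) : ¬ BL.acc c.qb :=
  let ⟨_, _, _, _, _, _, hq⟩ := h
  hq.not_acc

end DupInv

theorem rejectingInvariant_dupInv {idx : List (Fin nn)}
    (heq : (idx.map u).flatten = (idx.map v).flatten) :
    RejectingInvariant σPL (spoilerWord u v idx) fun n (c : Cfg (AL nn u v) BL) =>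
      DupInv (padded (idx.map u).flatten) (((spoilerWord u v idx).take n).countP σPL)
        (((spoilerWord u v idx).take n).countP fun x => !σPL x) c where
  init := ⟨0, le_rfl, 0, le_rfl, rfl, rfl, .inl ⟨rfl, rfl⟩⟩
  push n c q hc := by
    simp only [Stream'.take_succ', List.countP_append, List.countP_singleton]
    cases hσ : σPL (spoilerWord u v idx n)
    · have := hc.push₂ q
      rw [← spoilerWord_get_of_not_σPL heq hσ] at this
      simpa [midCfg, hσ, Stream'.get] using this
    · have := hc.push₁ q
      rw [← spoilerWord_get_of_σPL hσ] at this
      simpa [midCfg, hσ, Stream'.get] using this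
  pop₁ _ _ _ _ _ hc hb ht := hc.pop₁ (σPL_padded_get _) hb ht
  pop₂ _ _ _ _ _ hc hb ht := hc.pop₂ hb ht
  not_acc _ _ hc := hc.not_acc

end PCP

/-- If the PCP instance `L = {(u i, v i)}` (with nonempty words)
has a solution, then Spoiler wins the two-buffer simulation game with two unbounded
buffers on `𝒜_L` and `ℬ_L`: `𝒜_L ⋢(ω,ω) ℬ_L`. -/
theorem pcp_solution_implies_spoiler_wins (nn : ℕ) (u v : Fin nn → List Bool)
    (hu : ∀ i, u i ≠ []) (hv : ∀ i, v i ≠ [])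
    (hsol : ∃ idx : List (Fin nn), idx ≠ [] ∧
      (idx.map u).flatten = (idx.map v).flatten) :
    ¬ Sim2 (AL nn u v) BL σPL ⊤ ⊤ := by
  obtain ⟨idx, hne, heq⟩ := hsol
  exact not_sim2_of_rejectingInvariant (spoilerWord_mem_lang hu hv hne)
    (rejectingInvariant_dupInv heq) ⊤ ⊤
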